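/- Let X be any finite set of points in (P^1)^k with defining ideal I_X. Then for any i ∈ N^k and any l ∈ {1,...,k}, dim_k(R_{e_l}·(I_X)_i) = 2·dim_k(I_X)_i − dim_k(I_X)_{i - e_l}, where dim_k(I_X)_{i - e_l} = 0 if i - e_l ∉ N^k. -/

import Mathlib

open MvPolynomial

namespace MultiProjPoints

/-- The variable set of the multigraded coordinate ring of
`ℙ^{n 0} × ⋯ × ℙ^{n (k-1)}`: variables `x_{i,j}` with `i : Fin k`, `0 ≤ j ≤ n i`. -/
abbrev Var (k : ℕ) (n : Fin k → ℕ) := Σ i : Fin k, Fin (n i + 1)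

/-- The `ℕ^k`-grading weight: `deg x_{i,j} = e_i`. -/
def wt (k : ℕ) (n : Fin k → ℕ) : Var k n → (Fin k → ℕ) := fun v => Pi.single v.1 1

/-- The `i`-th standard basis vector of `ℕ^k`. -/
def e {k : ℕ} (l : Fin k) : Fin k → ℕ := Pi.single l 1

variable (K : Type) [Field K]

/-- The graded piece `R_d` of the `ℕ^k`-graded polynomial ring. -/
noncomputable def piece (k : ℕ) (n : Fin k → ℕ) (d : Fin k → ℕ) :
    Submodule K (MvPolynomial (Var k n) K) :=
  weightedHomogeneousSubmodule K (wt k n) d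

/-- `N(d) = ∏ binom (n i + d i) (d i)`, the dimension of `R_d`. -/
def NN (k : ℕ) (n : Fin k → ℕ) (d : Fin k → ℕ) : ℕ := ∏ i, (n i + d i).choose (d i)

/-- A (representative of a) point of `ℙ^{n 0} × ⋯ × ℙ^{n (k-1)}`. -/
def PointRep (k : ℕ) (n : Fin k → ℕ) := (i : Fin k) → Fin (n i + 1) → K

/-- A valid representative: every coordinate block is nonzero. -/
def IsRep {k : ℕ} {n : Fin k → ℕ} (P : PointRep K k n) : Prop := ∀ i, P i ≠ 0

/-- Two representatives define the same point of multi-projective space. -/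
def ProjEq {k : ℕ} {n : Fin k → ℕ} (P Q : PointRep K k n) : Prop :=
  ∀ i, ∃ c : K, c ≠ 0 ∧ P i = c • Q i

/-- A tuple of representatives giving `s` distinct points. -/
def SPoints {k : ℕ} {n : Fin k → ℕ} {s : ℕ} (P : Fin s → PointRep K k n) : Prop :=
  (∀ a, IsRep K (P a)) ∧ ∀ a b, a ≠ b → ¬ ProjEq K (P a) (P b)

/-- The defining ideal `I_X` of the set of points: all polynomials vanishing on
the multi-cone over the points, i.e. the intersection of the point ideals. -/
noncomputable def idealOfPoints {k : ℕ} {n : Fin k → ℕ} {s : ℕ}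
    (P : Fin s → PointRep K k n) : Ideal (MvPolynomial (Var k n) K) :=
  ⨅ (a : Fin s), ⨅ (c : Fin k → K),
    RingHom.ker (eval (fun v : Var k n => c v.1 * P a v.1 v.2))

/-- The degree-`d` piece `I_d` of an ideal, as a `K`-subspace. -/
noncomputable def idealPiece {k : ℕ} {n : Fin k → ℕ}
    (I : Ideal (MvPolynomial (Var k n) K)) (d : Fin k → ℕ) :
    Submodule K (MvPolynomial (Var k n) K) :=
  (Submodule.restrictScalars K I) ⊓ piece K k n d

/-- The multigraded Hilbert function of `X`:
`H_X(d) = dim (R/I_X)_d = dim R_d - dim (I_X)_d`. -/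
noncomputable def hilbert {k : ℕ} {n : Fin k → ℕ} {s : ℕ}
    (P : Fin s → PointRep K k n) (d : Fin k → ℕ) : ℕ :=
  NN k n d - Module.finrank K (idealPiece K (idealOfPoints K P) d)

/-- Generic position: `s` distinct points whose Hilbert function is maximal. -/
def GenericPosition {k : ℕ} {n : Fin k → ℕ} {s : ℕ} (P : Fin s → PointRep K k n) : Prop :=
  SPoints K P ∧ ∀ d : Fin k → ℕ, hilbert K P d = min (NN k n d) s

/-- `R_{e_l}·V`: the span of all products of a variable of degree `e_l`
with an element of `V`. -/
noncomputable def mulSpan {k : ℕ} {n : Fin k → ℕ} (l : Fin k)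
    (V : Submodule K (MvPolynomial (Var k n) K)) :
    Submodule K (MvPolynomial (Var k n) K) :=
  Submodule.span K {g | ∃ (m : Fin (n l + 1)) (f : MvPolynomial (Var k n) K),
    f ∈ V ∧ g = X (⟨l, m⟩ : Var k n) * f}

/-- `D = min { i ∈ ℕ^k | N(i) > s }` (minimal elements for the componentwise order). -/
def Dset (k : ℕ) (n : Fin k → ℕ) (s : ℕ) : Set (Fin k → ℕ) :=
  {i | s < NN k n i ∧ ∀ j : Fin k → ℕ, s < NN k n j → j ≤ i → j = i}

/-- The irrelevant maximal ideal of `R`, generated by all the variables. -/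
noncomputable def irrelevant (k : ℕ) (n : Fin k → ℕ) : Ideal (MvPolynomial (Var k n) K) :=
  Ideal.span (Set.range (X : Var k n → MvPolynomial (Var k n) K))

end MultiProjPoints

/-! Let `V = (I_X)_i` and let `x₀, x₁` be the variables of the `l`-th factor. The map
`V × V → R`, `(f, g) ↦ x₀ f + x₁ g`, has image `R_{e_l} · V`. Since `x₁` is prime and does not
divide `x₀`, its kernel is `{(x₁ h, -x₀ h) : x₀ h, x₁ h ∈ V}`. Such an `h` is homogeneous of
degree `i - e_l` (hence zero when `i_l = 0`), and it vanishes on `X` because every point has a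
nonzero coordinate in the `l`-th factor; so the kernel is `(I_X)_{i - e_l}`, and rank–nullity
gives the formula. -/

section Syzygy

variable {K A : Type*} [Field K] [CommRing A] [IsDomain A] [Algebra K A]

theorem exists_eq_mul_of_mul_add_mul_eq_zero {x y f g : A}
    (hy : Prime y) (hyx : ¬ y ∣ x) (h : x * f + y * g = 0) :
    ∃ q, f = y * q ∧ g = -(x * q) := by
  obtain ⟨q, rfl⟩ : y ∣ f :=
    (hy.dvd_or_dvd ⟨-g, by linear_combination h⟩).resolve_left hyx
  refine ⟨q, rfl, mul_left_cancel₀ hy.ne_zero ?_⟩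
  linear_combination h

theorem finrank_map_mulLeft_sup_add_finrank_comap_inf {x y : A} (hy : Prime y) (hyx : ¬ y ∣ x)
    (V : Submodule K A) [FiniteDimensional K V] :
    Module.finrank K ↥(V.map (LinearMap.mulLeft K x) ⊔ V.map (LinearMap.mulLeft K y)) +
      Module.finrank K ↥(V.comap (LinearMap.mulLeft K x) ⊓ V.comap (LinearMap.mulLeft K y)) =
      2 * Module.finrank K V := by
  set W := V.comap (LinearMap.mulLeft K x) ⊓ V.comap (LinearMap.mulLeft K y)
  let φ : V × V →ₗ[K] A :=
    ((LinearMap.mulLeft K x).comp V.subtype).coprod ((LinearMap.mulLeft K y).comp V.subtype)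
  let ψ : W →ₗ[K] V × V :=
    { toFun := fun q => (⟨y * q, q.2.2⟩, ⟨-(x * q), V.neg_mem q.2.1⟩)
      map_add' := fun _ _ => by ext <;> simp [mul_add, add_comm]
      map_smul' := fun _ _ => by ext <;> simp }
  have hrange :
      LinearMap.range φ = V.map (LinearMap.mulLeft K x) ⊔ V.map (LinearMap.mulLeft K y) := by
    simp [φ, LinearMap.range_coprod, LinearMap.range_comp]
  have hψ_inj : Function.Injective ψ := fun q r h => by
    simpa [ψ, hy.ne_zero] using congrArg (fun p => (p.1 : A)) h
  have hψ_range : LinearMap.range ψ = LinearMap.ker φ := by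
    apply le_antisymm
    · rintro _ ⟨q, rfl⟩
      simp [ψ, φ]; ring
    · rintro ⟨f, g⟩ hfg
      replace hfg : x * f + y * g = 0 := by simpa [φ] using hfg
      obtain ⟨q, hf, hg⟩ := exists_eq_mul_of_mul_add_mul_eq_zero hy hyx hfg
      have hqW : q ∈ W := ⟨by simpa [hg] using V.neg_mem g.2, by simpa [hf] using f.2⟩
      exact ⟨⟨q, hqW⟩, by ext <;> simp [ψ, hf, hg]⟩
  have := LinearMap.finrank_range_add_finrank_ker φ
  rw [hrange, ← hψ_range, LinearMap.finrank_range_of_inj hψ_inj, Module.finrank_prod] at this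
  omega

end Syzygy

namespace MvPolynomial.IsWeightedHomogeneous

variable {σ R M : Type*} [CommSemiring R] [AddCommMonoid M] {w : σ → M} {p : MvPolynomial σ R}
  {m : M} {v : σ}

theorem weight_le_of_X_mul [PartialOrder M] [CanonicallyOrderedAdd M] [Nontrivial R]
    (h : IsWeightedHomogeneous w (X v * p) m) (hp : p ≠ 0) : w v ≤ m := by
  obtain ⟨d, hd⟩ := ne_zero_iff.mp hp
  rw [← h (by rwa [coeff_X_mul]), map_add, Finsupp.weight_single, one_smul]
  exact le_self_add

theorem of_X_mul [PartialOrder M] [CanonicallyOrderedAdd M] [Sub M] [OrderedSub M]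
    [AddLeftReflectLE M] (h : IsWeightedHomogeneous w (X v * p) m) :
    IsWeightedHomogeneous w p (m - w v) := fun d hd => by
  rw [← h (by rwa [coeff_X_mul]), map_add, Finsupp.weight_single, one_smul, add_tsub_cancel_left]

theorem eval_prod_pow_mul {ι : Type*} [Fintype ι] {w : σ → ι → ℕ} {m : ι → ℕ}
    (h : IsWeightedHomogeneous w p m) (c : ι → R) (x : σ → R) :
    eval (fun v => (∏ t, c t ^ w v t) * x v) p = (∏ t, c t ^ m t) * eval x p := by
  rw [eval_eq, eval_eq, Finset.mul_sum]
  refine Finset.sum_congr rfl fun d hd => ?_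
  have hw : ∀ t, m t = ∑ v ∈ d.support, d v * w v t := by
    intro t
    rw [← h (mem_support_iff.mp hd), Finsupp.weight_apply, Finsupp.sum, Finset.sum_apply]
    simp
  have hc : ∏ t, c t ^ m t = ∏ v ∈ d.support, (∏ t, c t ^ w v t) ^ d v := by
    simp_rw [hw, ← Finset.prod_pow, ← pow_mul]
    rw [Finset.prod_comm]
    simp_rw [Finset.prod_pow_eq_pow_sum, mul_comm]
  rw [hc]
  simp_rw [mul_pow, Finset.prod_mul_distrib]
  ring

end MvPolynomial.IsWeightedHomogeneous

namespace MultiProjPoints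

variable {K : Type} [Field K] {k : ℕ} {n : Fin k → ℕ}

theorem eval_block_mul_of_isWeightedHomogeneous {p : MvPolynomial (Var k n) K} {d : Fin k → ℕ}
    (hp : IsWeightedHomogeneous (wt k n) p d) (c : Fin k → K) (x : Var k n → K) :
    eval (fun v => c v.1 * x v) p = (∏ t, c t ^ d t) * eval x p := by
  rw [← hp.eval_prod_pow_mul]
  congr! with v
  simp [wt, Pi.single_apply, pow_ite]

theorem mem_idealOfPoints_iff {s : ℕ} {P : Fin s → PointRep K k n}
    {p : MvPolynomial (Var k n) K} :
    p ∈ idealOfPoints K P ↔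
      ∀ a (c : Fin k → K), eval (fun v : Var k n => c v.1 * P a v.1 v.2) p = 0 := by
  simp [idealOfPoints]

theorem mem_idealOfPoints_of_forall_X_mul_mem {s : ℕ} {P : Fin s → PointRep K k n}
    (hP : ∀ a, IsRep K (P a)) {l : Fin k} {p : MvPolynomial (Var k n) K} {d : Fin k → ℕ}
    (hp : IsWeightedHomogeneous (wt k n) p d)
    (hX : ∀ j, X (⟨l, j⟩ : Var k n) * p ∈ idealOfPoints K P) :
    p ∈ idealOfPoints K P := by
  simp only [mem_idealOfPoints_iff] at hX ⊢
  intro a c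
  -- Rescaling the `l`-th block to `1` multiplies `p(c · P a)` by a constant, and at the
  -- rescaled point the nonzero coordinate `P a l j` forces `p` to vanish.
  obtain ⟨j, hj⟩ : ∃ j, P a l j ≠ 0 := Function.ne_iff.mp (hP a l)
  set c' := Function.update c l 1
  have h₁ : eval (fun v : Var k n => c' v.1 * P a v.1 v.2) p = 0 := by
    simpa [c', hj] using hX j a c'
  set r := Function.update (1 : Fin k → K) l (c l)
  have hc : ∀ v : Var k n, c v.1 * P a v.1 v.2 = r v.1 * (c' v.1 * P a v.1 v.2) := by
    intro v
    rcases eq_or_ne v.1 l with hv | hv <;> simp [r, c', hv]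
  rw [funext hc, eval_block_mul_of_isWeightedHomogeneous hp, h₁, mul_zero]

theorem piece_le_restrictTotalDegree (d : Fin k → ℕ) :
    piece K k n d ≤ restrictTotalDegree (Var k n) K (∑ t, d t) := by
  intro p hp
  rw [mem_restrictTotalDegree, totalDegree, Finset.sup_le_iff]
  intro m hm
  rw [← hp (mem_support_iff.mp hm), Finsupp.weight_apply, Finsupp.sum, Finsupp.sum]
  simp only [Finset.sum_apply, wt, Pi.smul_apply, smul_eq_mul]
  rw [Finset.sum_comm]
  simp [Pi.single_apply]

instance (d : Fin k → ℕ) : FiniteDimensional K (piece K k n d) :=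
  Submodule.finiteDimensional_of_le (piece_le_restrictTotalDegree d)

instance (I : Ideal (MvPolynomial (Var k n) K)) (d : Fin k → ℕ) :
    FiniteDimensional K (idealPiece K I d) :=
  Submodule.finiteDimensional_of_le inf_le_right

theorem e_le_iff {l : Fin k} {i : Fin k → ℕ} : e l ≤ i ↔ i l ≠ 0 := by
  rw [e, Pi.single, update_le_iff]
  simp [Nat.one_le_iff_ne_zero]

theorem X_mul_mem_idealPiece (I : Ideal (MvPolynomial (Var k n) K)) {l : Fin k}
    {i : Fin k → ℕ} (hi : e l ≤ i) {p : MvPolynomial (Var k n) K}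
    (hp : p ∈ idealPiece K I (i - e l)) (j : Fin (n l + 1)) :
    X ⟨l, j⟩ * p ∈ idealPiece K I i := by
  refine ⟨I.mul_mem_left _ hp.1, ?_⟩
  have := (isWeightedHomogeneous_X K (wt k n) (⟨l, j⟩ : Var k n)).mul hp.2
  rwa [show wt k n ⟨l, j⟩ = e l from rfl, add_tsub_cancel_of_le hi] at this

theorem comap_X_mul_idealPiece_eq_bot (I : Ideal (MvPolynomial (Var k n) K)) {l : Fin k}
    {i : Fin k → ℕ} (hi : i l = 0) (j : Fin (n l + 1)) :
    (idealPiece K I i).comap (LinearMap.mulLeft K (X ⟨l, j⟩)) = ⊥ :=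
  (Submodule.eq_bot_iff _).mpr fun _ hp => by_contra fun h =>
    e_le_iff.mp (IsWeightedHomogeneous.weight_le_of_X_mul (w := wt k n) hp.2 h) hi

theorem mem_idealPiece_of_forall_X_mul_mem {s : ℕ} {P : Fin s → PointRep K k n}
    (hP : ∀ a, IsRep K (P a)) {l : Fin k} {i : Fin k → ℕ} {p : MvPolynomial (Var k n) K}
    (hX : ∀ j, X ⟨l, j⟩ * p ∈ idealPiece K (idealOfPoints K P) i) :
    p ∈ idealPiece K (idealOfPoints K P) (i - e l) :=
  have hp : IsWeightedHomogeneous (wt k n) p (i - e l) := (hX 0).2.of_X_mul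
  ⟨mem_idealOfPoints_of_forall_X_mul_mem hP hp fun j => (hX j).1, hp⟩

theorem mulSpan_eq_sup (l : Fin k) (V : Submodule K (MvPolynomial (Var k fun _ => 1) K)) :
    mulSpan K l V =
      V.map (LinearMap.mulLeft K (X ⟨l, 0⟩)) ⊔ V.map (LinearMap.mulLeft K (X ⟨l, 1⟩)) := by
  apply le_antisymm
  · refine Submodule.span_le.mpr ?_
    rintro _ ⟨j, f, hf, rfl⟩
    fin_cases j
    · exact Submodule.mem_sup_left ⟨f, hf, rfl⟩
    · exact Submodule.mem_sup_right ⟨f, hf, rfl⟩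
  · refine sup_le ?_ ?_ <;> rintro _ ⟨f, hf, rfl⟩ <;> exact Submodule.subset_span ⟨_, f, hf, rfl⟩

theorem comap_X_mul_inf_comap_X_mul_idealPiece {s : ℕ} {P : Fin s → PointRep K k fun _ => 1}
    (hP : ∀ a, IsRep K (P a)) {l : Fin k} {i : Fin k → ℕ} (hi : i l ≠ 0) :
    (idealPiece K (idealOfPoints K P) i).comap (LinearMap.mulLeft K (X ⟨l, 0⟩)) ⊓
        (idealPiece K (idealOfPoints K P) i).comap (LinearMap.mulLeft K (X ⟨l, 1⟩)) =
      idealPiece K (idealOfPoints K P) (i - e l) := by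
  ext p
  exact ⟨fun h => mem_idealPiece_of_forall_X_mul_mem hP (Fin.forall_fin_two.mpr h),
    fun hp => ⟨X_mul_mem_idealPiece _ (e_le_iff.mpr hi) hp 0,
      X_mul_mem_idealPiece _ (e_le_iff.mpr hi) hp 1⟩⟩

theorem dim_mulSpan_P1 (K : Type) [Field K] (k : ℕ) {s : ℕ}
    (P : Fin s → PointRep K k (fun _ => 1)) (hP : SPoints K P)
    (i : Fin k → ℕ) (l : Fin k) :
    Module.finrank K (mulSpan K l (idealPiece K (idealOfPoints K P) i))
      = 2 * Module.finrank K (idealPiece K (idealOfPoints K P) i)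
        - (if i l = 0 then 0
           else Module.finrank K (idealPiece K (idealOfPoints K P) (i - e l))) := by
  have hX : ¬ (X ⟨l, 1⟩ : MvPolynomial (Var k fun _ => 1) K) ∣ X ⟨l, 0⟩ := by
    simp [X_dvd_X]
  have key := finrank_map_mulLeft_sup_add_finrank_comap_inf
    (X_prime (i := (⟨l, 1⟩ : Var k fun _ => 1))) hX (idealPiece K (idealOfPoints K P) i)
  rw [← mulSpan_eq_sup] at key
  by_cases hil : i l = 0
  · rw [comap_X_mul_idealPiece_eq_bot (n := fun _ => 1) _ hil 0, bot_inf_eq, finrank_bot] at key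
    rw [if_pos hil]
    exact Nat.eq_sub_of_add_eq key
  · rw [comap_X_mul_inf_comap_X_mul_idealPiece hP.1 hil] at key
    rw [if_neg hil]
    exact Nat.eq_sub_of_add_eq key

end MultiProjPoints
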